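/- Let (u_δ, m_δ, μ_δ), δ ∈ (0,1), be the solutions of the auxiliary system with potential δV arising from minimizers (m_δ, w_δ) of e_δ. Then lim_{δ→0⁺} e_δ = e₀, and moreover lim_{δ→0⁺} δ ∫_{ℝⁿ} V(x) m_δ dx = 0. -/

import Mathlib

open MeasureTheory Filter
open scoped ENNReal Topology RealInnerProductSpace

noncomputable section

/-- Euclidean space `ℝⁿ`. -/
abbrev En (n : ℕ) : Type := EuclideanSpace ℝ (Fin n)

variable {n : ℕ}

/-- The Laplacian of a scalar function, as the trace of the second derivative. -/
def lap (u : En n → ℝ) (x : En n) : ℝ :=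
  ∑ i : Fin n,
    fderiv ℝ (fun y => fderiv ℝ u y (EuclideanSpace.single i 1)) x (EuclideanSpace.single i 1)

/-- The Legendre transform `L(q) = sup_p (p·q − H(p))`. -/
def legendre (H : En n → ℝ) (q : En n) : ℝ :=
  ⨆ p : En n, ((⟪p, q⟫ : ℝ) - H p)

/-- Hypotheses (H1)–(H2) on the Hamiltonian: strict convexity, `C²` regularity away from the
origin, positive homogeneity of degree `γ > 1`, and positivity on the unit sphere. -/
structure IsHamiltonian (n : ℕ) (H : En n → ℝ) (γ C_H : ℝ) : Prop where
  strictConvex : StrictConvexOn ℝ (Set.univ : Set (En n)) H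
  smooth : ContDiffOn ℝ 2 H ({(0 : En n)}ᶜ)
  one_lt_gamma : 1 < γ
  homogeneous : ∀ t : ℝ, 0 < t → ∀ p : En n, H (t • p) = t ^ γ * H p
  CH_pos : 0 < C_H
  unit_lower : ∀ p : En n, ‖p‖ = 1 → C_H ≤ H p

/-- The integrand `m L(−w/m)` (with the usual convention: `0` where `m` is not positive). -/
def mLK (L : En n → ℝ) (m : En n → ℝ) (w : En n → En n) (x : En n) : ℝ :=
  if 0 < m x then m x * L (-((m x)⁻¹ • w x)) else 0

/-- The kinetic energy `∫ m L(−w/m)`. -/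
def kinetic (L : En n → ℝ) (m : En n → ℝ) (w : En n → En n) : ℝ :=
  ∫ x : En n, mLK L m w x

/-- The total mass `∫ m`. -/
def massInt (m : En n → ℝ) : ℝ := ∫ x : En n, m x

/-- `∫ m^{1+α}`. -/
def powInt (α : ℝ) (m : En n → ℝ) : ℝ := ∫ x : En n, (m x) ^ (1 + α)

/-- Specification of the exponent `q̂`. -/
def QhatSpec (n : ℕ) (γ' q : ℝ) : Prop :=
  (γ' < n → q = n / (n - γ' + 1)) ∧
  (γ' = n → 2 * n / (n + 2) < q ∧ q < n) ∧
  ((n : ℝ) < γ' → q = γ')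

/-- Membership in the Sobolev space `W^{1,p}(ℝⁿ)`. -/
def MemW1p (p : ℝ) (m : En n → ℝ) : Prop :=
  MemLp m (ENNReal.ofReal p) volume ∧ MemLp (gradient m) (ENNReal.ofReal p) volume

/-- Local Hölder continuity. -/
def LocHolder (f : En n → ℝ) : Prop :=
  ∀ R : ℝ, 0 < R → ∃ C θ : ℝ, 0 < θ ∧ θ < 1 ∧ 0 ≤ C ∧
    ∀ x y : En n, ‖x‖ ≤ R → ‖y‖ ≤ R → |f x - f y| ≤ C * ‖x - y‖ ^ θ

/-- Assumption (V1): local boundedness and coercivity of the potential. -/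
structure VHyp1 (n : ℕ) (V : En n → ℝ) : Prop where
  locBdd : ∀ R : ℝ, ∃ C : ℝ, ∀ x : En n, ‖x‖ ≤ R → |V x| ≤ C
  coercive : Tendsto V (cocompact (En n)) atTop

/-- Assumption (V2) on the potential, with constants `C₁, C₂, K, b > 0`. -/
structure VHyp2 (n : ℕ) (V : En n → ℝ) (C₁ C₂ K b : ℝ) : Prop where
  C₁_pos : 0 < C₁
  C₂_pos : 0 < C₂
  K_pos : 0 < K
  b_pos : 0 < b
  pos : ∀ x : En n, K ≤ ‖x‖ → 0 < V x
  upper : ∀ x : En n, K ≤ ‖x‖ → V x ≤ C₂ * ‖x‖ ^ b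
  ratio_lower : ∀ x y : En n, K ≤ ‖x‖ → ‖y‖ < 2 → C₁ ≤ V (x + y) / V x
  ratio_upper : ∀ x y : En n, K ≤ ‖x‖ → ‖y‖ < 2 → V (x + y) / V x ≤ C₂
  scaling : ∀ x : En n, K ≤ ‖x‖ → ∀ ν : ℝ, ν ∈ Set.Icc (0:ℝ) 1 → V (ν • x) ≤ C₂ * V x

/-- The admissible class `𝒜`. -/
structure MemAdm (V : En n → ℝ) (qh : ℝ) (m : En n → ℝ) (w : En n → En n) : Prop where
  m_L1 : Integrable m volume
  m_W1q : MemW1p qh m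
  w_L1 : Integrable w volume
  fp : ∀ φ : En n → ℝ, ContDiff ℝ (⊤ : ℕ∞) φ → HasCompactSupport φ →
    ∫ x : En n, (⟪gradient m x, gradient φ x⟫ : ℝ)
      = ∫ x : En n, (⟪w x, gradient φ x⟫ : ℝ)
  Vm_int : Integrable (fun x : En n => V x * m x) volume
  m_nonneg : ∀ᵐ x ∂(volume : Measure (En n)), 0 ≤ m x
  m_nontriv : ¬ m =ᵐ[(volume : Measure (En n))] (fun _ => (0:ℝ))

/-- The functional `J₀`. -/
def Jfun (L : En n → ℝ) (α : ℝ) (m : En n → ℝ) (w : En n → En n) : ℝ :=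
  kinetic L m w - (1 / (1 + α)) * powInt α m

/-- The functional `E_δ`. -/
def Efun (L V : En n → ℝ) (δ : ℝ) (m : En n → ℝ) (w : En n → En n) : ℝ :=
  kinetic L m w + ∫ x : En n, (δ * V x + 1) * m x

/-- The infimum `e_δ`. -/
def eDelta (L V : En n → ℝ) (qh α δ : ℝ) : ℝ :=
  sInf {r : ℝ | ∃ m : En n → ℝ, ∃ w : En n → En n,
    MemAdm V qh m w ∧ powInt α m = 1 ∧ r = Efun L V δ m w}

/-- The infimum `e₀`. -/
def eZero (L V : En n → ℝ) (qh α : ℝ) : ℝ :=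
  sInf {r : ℝ | ∃ m : En n → ℝ, ∃ w : En n → En n,
    MemAdm V qh m w ∧ powInt α m = 1 ∧ r = kinetic L m w + massInt m}

/-- The Gagliardo–Nirenberg quotient. -/
def GNquot (L : En n → ℝ) (γ' α : ℝ) (m : En n → ℝ) (w : En n → En n) : ℝ :=
  (kinetic L m w ^ ((n : ℝ) * α / γ') *
    massInt m ^ (((α + 1) * γ' - (n : ℝ) * α) / γ')) / powInt α m

/-- The optimal Gagliardo–Nirenberg constant `Γ_α`. -/
def GNconst (L V : En n → ℝ) (qh γ' α : ℝ) : ℝ :=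
  sInf {r : ℝ | ∃ m : En n → ℝ, ∃ w : En n → En n,
    MemAdm V qh m w ∧ r = GNquot L γ' α m w}

/-- Classical solution of the potential-free MFG system with coupling `−m^α` and mass `M`:
`−Δu + H(∇u) + λ = −m^α`, `Δm + ∇·(m ∇H(∇u)) = 0` (weakly), `∫ m = M`. -/
structure MFGSolution (H : En n → ℝ) (α M : ℝ) (u m : En n → ℝ) (lam : ℝ) : Prop where
  u_C2 : ContDiff ℝ 2 u
  m_nonneg : ∀ x : En n, 0 ≤ m x
  m_L1 : Integrable m volume
  m_W1p : ∀ p : ℝ, 1 < p → MemW1p p m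
  hjb : ∀ x : En n, -lap u x + H (gradient u x) + lam = -((m x) ^ α)
  fp : ∀ φ : En n → ℝ, ContDiff ℝ (⊤ : ℕ∞) φ → HasCompactSupport φ →
    ∫ x : En n, (⟪gradient m x, gradient φ x⟫ : ℝ)
      = ∫ x : En n, (⟪-((m x) • gradient H (gradient u x)), gradient φ x⟫ : ℝ)
  mass_eq : massInt m = M

/-- Admissible mountain-pass paths on `𝒜 ∩ {‖m‖_{L¹} = M}`. -/
def PathSet (L V : En n → ℝ) (qh α M R₀ : ℝ)
    (h : ℝ → (En n → ℝ) × (En n → En n)) : Prop :=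
  (∀ t ∈ Set.Icc (0:ℝ) 1, MemAdm V qh (h t).1 (h t).2 ∧ massInt (h t).1 = M) ∧
  ContinuousOn (fun t => kinetic L (h t).1 (h t).2) (Set.Icc (0:ℝ) 1) ∧
  ContinuousOn (fun t => powInt α (h t).1) (Set.Icc (0:ℝ) 1) ∧
  kinetic L (h 0).1 (h 0).2 ≤ R₀ ∧
  2 * R₀ ≤ kinetic L (h 1).1 (h 1).2 ∧
  0 < Jfun L α (h 0).1 (h 0).2 ∧
  Jfun L α (h 1).1 (h 1).2 < 0

/-- The mountain-pass level `e_MP`. -/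
def eMP (L V : En n → ℝ) (qh α M R₀ : ℝ) : ℝ :=
  sInf {r : ℝ | ∃ h : ℝ → (En n → ℝ) × (En n → En n), PathSet L V qh α M R₀ h ∧
    r = sSup {s : ℝ | ∃ t ∈ Set.Icc (0:ℝ) 1, s = Jfun L α (h t).1 (h t).2}}

/-- Solution of the potential-free auxiliary system
`−Δu + H(∇u) + μ m^α = 1`, `Δm + ∇·(m ∇H(∇u)) = 0` (weakly). -/
structure AuxSolution (H : En n → ℝ) (α μ : ℝ) (u m : En n → ℝ) : Prop where
  u_C2 : ContDiff ℝ 2 u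
  u_bddBelow : BddBelow (Set.range u)
  m_nonneg : ∀ x : En n, 0 ≤ m x
  m_L1 : Integrable m volume
  hjb : ∀ x : En n, -lap u x + H (gradient u x) + μ * (m x) ^ α = 1
  fp : ∀ φ : En n → ℝ, ContDiff ℝ (⊤ : ℕ∞) φ → HasCompactSupport φ →
    ∫ x : En n, (⟪gradient m x, gradient φ x⟫ : ℝ)
      = ∫ x : En n, (⟪-((m x) • gradient H (gradient u x)), gradient φ x⟫ : ℝ)

/-- Convolution on `ℝⁿ`. -/
def conv (f g : En n → ℝ) (x : En n) : ℝ := ∫ y : En n, f y * g (x - y)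

/-- A standard mollifier at scale `1/k`. -/
structure IsMollifier (k : ℕ) (η : En n → ℝ) : Prop where
  k_pos : 0 < k
  smooth : ContDiff ℝ (⊤ : ℕ∞) η
  nonneg : ∀ x : En n, 0 ≤ η x
  mass_one : ∫ x : En n, η x = 1
  supp : tsupport η ⊆ Metric.ball (0 : En n) (1 / (k : ℝ))

/-- The regularized infimum `ẽ_{δ,k}`. -/
def eTilde (L V : En n → ℝ) (qh α δ : ℝ) (η : En n → ℝ) : ℝ :=
  sInf {r : ℝ | ∃ m : En n → ℝ, ∃ w : En n → En n, MemAdm V qh m w ∧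
    (∫ x : En n, (conv m η x) ^ (1 + α)) = 1 ∧ r = Efun L V δ m w}

/-- The linearized infimum `ē_{δ,k}` (relative to a fixed `m̃ = mt`). -/
def eBar (L V : En n → ℝ) (qh α δ : ℝ) (η mt : En n → ℝ) : ℝ :=
  sInf {r : ℝ | ∃ m : En n → ℝ, ∃ w : En n → En n, MemAdm V qh m w ∧
    (∫ x : En n, conv (fun y => (conv mt η y) ^ α) η x * m x) = 1 ∧ r = Efun L V δ m w}

/-- The set of `λ` for which the ergodic HJB equation has a `C²` solution. -/
def HJBset (H : En n → ℝ) (g : En n → ℝ) : Set ℝ :=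
  {lam : ℝ | ∃ u : En n → ℝ, ContDiff ℝ 2 u ∧
    ∀ x : En n, -lap u x + H (gradient u x) + lam = g x}

/-- The set of `λ` for which the ergodic HJB equation has a `C²` subsolution. -/
def HJBsubSet (H : En n → ℝ) (g : En n → ℝ) : Set ℝ :=
  {lam : ℝ | ∃ u : En n → ℝ, ContDiff ℝ 2 u ∧
    ∀ x : En n, -lap u x + H (gradient u x) + lam ≤ g x}

/-- The critical ergodic constant `λ̄`. -/
def lamBar (H : En n → ℝ) (g : En n → ℝ) : ℝ := sSup (HJBset H g)

/-- The Hamiltonian vanishes at the origin. -/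
lemma H_zero_aux {n : ℕ} {H : En n → ℝ} {γ C_H : ℝ} (hH : IsHamiltonian n H γ C_H) :
    H 0 = 0 := by
  have h := hH.homogeneous 2 (by norm_num) 0
  rw [smul_zero] at h
  have h2 : (1:ℝ) < (2:ℝ) ^ γ := by
    have := (Real.rpow_lt_rpow_left_iff (x := (2:ℝ)) (by norm_num)).2
      (show (0:ℝ) < γ by linarith [hH.one_lt_gamma])
    simpa using this
  have h3 : ((2:ℝ) ^ γ - 1) * H 0 = 0 := by linear_combination -h
  rcases mul_eq_zero.1 h3 with h4 | h4
  · exfalso; linarith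
  · exact h4

/-- The Legendre transform is nonnegative. -/
lemma legendre_nonneg_aux {n : ℕ} {H : En n → ℝ} {γ C_H : ℝ}
    (hH : IsHamiltonian n H γ C_H) (q : En n) : 0 ≤ legendre H q := by
  unfold legendre
  by_cases hb : BddAbove (Set.range fun p : En n => (⟪p, q⟫ : ℝ) - H p)
  · have h0 : (⟪(0 : En n), q⟫ : ℝ) - H 0 = 0 := by
      rw [H_zero_aux hH]; simp
    calc (0:ℝ) = (⟪(0 : En n), q⟫ : ℝ) - H 0 := h0.symm
      _ ≤ _ := le_ciSup hb 0
  · rw [Real.iSup_of_not_bddAbove hb]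

/-- The potential is bounded below. -/
lemma V_lower_aux {n : ℕ} {V : En n → ℝ} (hV1 : VHyp1 n V) :
    ∃ C : ℝ, 0 ≤ C ∧ ∀ x : En n, -C ≤ V x := by
  have h : {x : En n | 0 ≤ V x} ∈ cocompact (En n) :=
    hV1.coercive.eventually (eventually_ge_atTop (0:ℝ))
  obtain ⟨t, htc, hsub⟩ := Filter.mem_cocompact.1 h
  obtain ⟨R, hR⟩ := htc.isBounded.subset_closedBall (0 : En n)
  obtain ⟨C₀, hC₀⟩ := hV1.locBdd R
  refine ⟨max C₀ 0, le_max_right _ _, fun x => ?_⟩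
  by_cases hx : ‖x‖ ≤ R
  · have := (abs_le.1 (hC₀ x hx)).1
    have : -C₀ ≤ V x := this
    have h2 : C₀ ≤ max C₀ 0 := le_max_left _ _
    linarith
  · have hxt : x ∉ t := by
      intro hxt
      exact hx (by simpa [mem_closedBall_zero_iff] using hR hxt)
    have : 0 ≤ V x := hsub hxt
    have h2 : (0:ℝ) ≤ max C₀ 0 := le_max_right _ _
    linarith

set_option maxHeartbeats 1000000 in
/-- Lemma 3.3: convergence of the energies `e_δ → e₀` as `δ → 0⁺`, and
vanishing of the potential term `δ ∫ V m_δ → 0` along the minimizers `(m_δ, w_δ)` of `e_δ`. -/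
theorem energy_convergence
    (n : ℕ) (hn : 2 ≤ n)
    (H : En n → ℝ) (γ C_H : ℝ) (hH : IsHamiltonian n H γ C_H)
    (γ' : ℝ) (hγ' : γ' = γ / (γ - 1))
    (V : En n → ℝ) (hVho : LocHolder V) (hV1 : VHyp1 n V)
    (C₁ C₂ K b : ℝ) (hV2 : VHyp2 n V C₁ C₂ K b)
    (qh : ℝ) (hqh : QhatSpec n γ' qh)
    (α : ℝ) (hα₀ : 0 < α) (hα₂ : γ' < n → α < γ' / (n - γ'))
    (m : ℝ → En n → ℝ) (w : ℝ → En n → En n)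
    (hmin : ∀ δ ∈ Set.Ioo (0:ℝ) 1,
      MemAdm V qh (m δ) (w δ) ∧ powInt α (m δ) = 1 ∧
      Efun (legendre H) V δ (m δ) (w δ) = eDelta (legendre H) V qh α δ) :
    Tendsto (fun δ => eDelta (legendre H) V qh α δ) (𝓝[>] (0:ℝ))
        (𝓝 (eZero (legendre H) V qh α)) ∧
    Tendsto (fun δ => δ * ∫ x : En n, V x * m δ x) (𝓝[>] (0:ℝ)) (𝓝 0) := by
  
  obtain ⟨C, hC0, hCV⟩ := V_lower_aux hV1
  set Lf := legendre H with hLf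
  have hLnn : ∀ q : En n, 0 ≤ Lf q := legendre_nonneg_aux hH
  -- kinetic energy is nonnegative
  have hkin : ∀ (m' : En n → ℝ) (w' : En n → En n), 0 ≤ kinetic Lf m' w' := by
    intro m' w'
    refine integral_nonneg fun x => ?_
    unfold mLK
    split
    · exact mul_nonneg (le_of_lt (by assumption)) (hLnn _)
    · exact le_rfl
  have hmass : ∀ (m' : En n → ℝ), MemAdm V qh m' (fun _ => (0:En n)) → True := fun _ _ => trivial
  have hmass0 : ∀ (m' : En n → ℝ) (w' : En n → En n), MemAdm V qh m' w' → 0 ≤ massInt m' :=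
    fun m' w' h => integral_nonneg_of_ae h.m_nonneg
  have hVmge : ∀ (m' : En n → ℝ) (w' : En n → En n), MemAdm V qh m' w' →
      -(C * massInt m') ≤ ∫ x : En n, V x * m' x := by
    intro m' w' h
    have h1 : Integrable (fun x : En n => -C * m' x) volume := h.m_L1.const_mul _
    have h2 : (∫ x : En n, -C * m' x) ≤ ∫ x : En n, V x * m' x := by
      refine integral_mono_ae h1 h.Vm_int ?_
      filter_upwards [h.m_nonneg] with x hx
      exact mul_le_mul_of_nonneg_right (hCV x) hx
    calc -(C * massInt m') = ∫ x : En n, -C * m' x := by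
          rw [integral_const_mul]; unfold massInt; ring
      _ ≤ _ := h2
  have hsplit : ∀ (δ : ℝ) (m' : En n → ℝ) (w' : En n → En n), MemAdm V qh m' w' →
      Efun Lf V δ m' w'
        = kinetic Lf m' w' + massInt m' + δ * ∫ x : En n, V x * m' x := by
    intro δ m' w' h
    unfold Efun massInt
    have heq : (fun x : En n => (δ * V x + 1) * m' x)
        = fun x : En n => δ * (V x * m' x) + m' x := by funext x; ring
    rw [heq, integral_add (h.Vm_int.const_mul δ) h.m_L1, integral_const_mul]
    ring
  -- elements of the δ-constraint set are nonnegative when δ C ≤ 1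
  have helem : ∀ δ : ℝ, 0 ≤ δ → δ * C ≤ 1 →
      ∀ (m' : En n → ℝ) (w' : En n → En n), MemAdm V qh m' w' →
      0 ≤ Efun Lf V δ m' w' := by
    intro δ hδ hδC m' w' h
    rw [hsplit δ m' w' h]
    have h1 := hkin m' w'
    have h2 := hmass0 m' w' h
    have h3 := hVmge m' w' h
    have h4 : δ * (-(C * massInt m')) ≤ δ * ∫ x : En n, V x * m' x :=
      mul_le_mul_of_nonneg_left h3 hδ
    nlinarith [mul_nonneg h2 (sub_nonneg.2 hδC)]
  -- the δ = 0 constraint set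
  set S0 : Set ℝ := {r : ℝ | ∃ m' : En n → ℝ, ∃ w' : En n → En n,
      MemAdm V qh m' w' ∧ powInt α m' = 1 ∧ r = kinetic Lf m' w' + massInt m'} with hS0def
  have hS0ne : S0.Nonempty := by
    obtain ⟨hA1, hp1, _⟩ := hmin (1/2) ⟨by norm_num, by norm_num⟩
    exact ⟨_, m (1/2), w (1/2), hA1, hp1, rfl⟩
  have hS0lb : ∀ r ∈ S0, (0:ℝ) ≤ r := by
    rintro r ⟨m', w', hA, hp, rfl⟩
    have := hkin m' w'
    have := hmass0 m' w' hA
    linarith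
  set e0 : ℝ := eZero Lf V qh α with he0def
  have he0inf : e0 = sInf S0 := by rw [hS0def]; rfl
  have he0nn : 0 ≤ e0 := by rw [he0inf]; exact le_csInf hS0ne hS0lb
  -- lower bound e0 ≤ k + M for admissible pairs with unit norm
  have hE0le : ∀ (m' : En n → ℝ) (w' : En n → En n), MemAdm V qh m' w' → powInt α m' = 1 →
      e0 ≤ kinetic Lf m' w' + massInt m' := by
    intro m' w' hA hp
    rw [he0inf]
    exact csInf_le ⟨0, hS0lb⟩ ⟨m', w', hA, hp, rfl⟩
  -- δ-level infimum is below the energy of any competitor, for small δ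
  have hδC1 : ∀ δ : ℝ, 0 < δ → δ < 1 / (2 * (C + 1)) → δ * C ≤ 1 ∧ δ * C ≤ 1/2 := by
    intro δ hδ hδ'
    have hC1 : (0:ℝ) < 2 * (C + 1) := by linarith
    have := (lt_div_iff₀ hC1).1 hδ'
    constructor <;> nlinarith
  have hEle : ∀ δ : ℝ, 0 < δ → δ < 1 / (2 * (C + 1)) →
      ∀ (m' : En n → ℝ) (w' : En n → En n), MemAdm V qh m' w' → powInt α m' = 1 →
      eDelta Lf V qh α δ
        ≤ kinetic Lf m' w' + massInt m' + δ * ∫ x : En n, V x * m' x := by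
    intro δ hδ hδ' m' w' hA hp
    have hδC := (hδC1 δ hδ hδ').1
    have hbdd : BddBelow {r : ℝ | ∃ m'' : En n → ℝ, ∃ w'' : En n → En n,
        MemAdm V qh m'' w'' ∧ powInt α m'' = 1 ∧ r = Efun Lf V δ m'' w''} := by
      refine ⟨0, ?_⟩
      rintro r ⟨m'', w'', hA'', hp'', rfl⟩
      exact helem δ hδ.le hδC m'' w'' hA''
    rw [← hsplit δ m' w' hA]
    exact csInf_le hbdd ⟨m', w', hA, hp, rfl⟩
  -- fixed competitor and uniform bound B
  obtain ⟨hA1, hp1, _⟩ := hmin (1/2) ⟨by norm_num, by norm_num⟩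
  set r₁ : ℝ := kinetic Lf (m (1/2)) (w (1/2)) + massInt (m (1/2)) with hr₁
  set I₁ : ℝ := ∫ x : En n, V x * m (1/2) x with hI₁
  set B : ℝ := r₁ + |I₁| with hB
  have hr₁nn : 0 ≤ r₁ := by
    have := hkin (m (1/2)) (w (1/2)); have := hmass0 _ _ hA1; rw [hr₁]; linarith
  have hBnn : 0 ≤ B := by rw [hB]; have := abs_nonneg I₁; linarith
  set δs : ℝ := min 1 (1 / (2 * (C + 1))) with hδs
  have hδspos : 0 < δs := lt_min one_pos (by positivity)
  -- master block of estimates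
  have hblock : ∀ δ : ℝ, δ ∈ Set.Ioo (0:ℝ) δs →
      (eDelta Lf V qh α δ ≤ B) ∧
      (δ * (∫ x : En n, V x * m δ x) ≤ eDelta Lf V qh α δ - e0) ∧
      (-(2*C*B) * δ ≤ δ * (∫ x : En n, V x * m δ x)) := by
    rintro δ ⟨hδ0, hδ1⟩
    have hδlt1 : δ < 1 := lt_of_lt_of_le hδ1 (min_le_left _ _)
    have hδlt2 : δ < 1 / (2 * (C + 1)) := lt_of_lt_of_le hδ1 (min_le_right _ _)
    obtain ⟨hδC, hδC2⟩ := hδC1 δ hδ0 hδlt2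
    obtain ⟨hAδ, hpδ, heδ⟩ := hmin δ ⟨hδ0, hδlt1⟩
    have heq : eDelta Lf V qh α δ
        = kinetic Lf (m δ) (w δ) + massInt (m δ) + δ * ∫ x : En n, V x * m δ x := by
      rw [← heδ, hsplit δ (m δ) (w δ) hAδ]
    have hup : eDelta Lf V qh α δ ≤ r₁ + δ * I₁ := hEle δ hδ0 hδlt2 _ _ hA1 hp1
    have hδI₁ : δ * I₁ ≤ |I₁| := by
      calc δ * I₁ ≤ δ * |I₁| := mul_le_mul_of_nonneg_left (le_abs_self _) hδ0.le
        _ ≤ 1 * |I₁| := mul_le_mul_of_nonneg_right (by linarith) (abs_nonneg _)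
        _ = |I₁| := one_mul _
    have hupB : eDelta Lf V qh α δ ≤ B := by rw [hB]; linarith
    have hkδ := hkin (m δ) (w δ)
    have hMδ := hmass0 (m δ) (w δ) hAδ
    have hIδ := hVmge (m δ) (w δ) hAδ
    have hIδ' : δ * (-(C * massInt (m δ))) ≤ δ * ∫ x : En n, V x * m δ x :=
      mul_le_mul_of_nonneg_left hIδ hδ0.le
    -- bound on the mass
    have hM2B : massInt (m δ) ≤ 2 * B := by
      nlinarith [mul_nonneg hMδ (by linarith : (0:ℝ) ≤ 1/2 - δ * C)]
    have hge : e0 ≤ kinetic Lf (m δ) (w δ) + massInt (m δ) := hE0le _ _ hAδ hpδ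
    refine ⟨hupB, by linarith, ?_⟩
    have h5 : δ * (C * massInt (m δ)) ≤ δ * (C * (2 * B)) := by
      have : C * massInt (m δ) ≤ C * (2 * B) := mul_le_mul_of_nonneg_left hM2B hC0
      exact mul_le_mul_of_nonneg_left this hδ0.le
    nlinarith
  have hIoo : Set.Ioo (0:ℝ) δs ∈ 𝓝[>] (0:ℝ) :=
    Ioo_mem_nhdsGT_of_mem ⟨le_rfl, hδspos⟩
  -- the linear lower-bound function tends to e0
  have htl : Tendsto (fun δ : ℝ => e0 - 2*C*B*δ) (𝓝[>] (0:ℝ)) (𝓝 e0) := by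
    have h1 : Tendsto (fun δ : ℝ => e0 - 2*C*B*δ) (𝓝 (0:ℝ)) (𝓝 (e0 - 2*C*B*0)) :=
      (continuous_const.sub ((continuous_const.mul continuous_id))).tendsto 0
    have h2 : Tendsto (fun δ : ℝ => e0 - 2*C*B*δ) (𝓝[>] (0:ℝ)) (𝓝 (e0 - 2*C*B*0)) :=
      h1.mono_left nhdsWithin_le_nhds
    have h3 : e0 - 2*C*B*0 = e0 := by ring
    rw [h3] at h2
    exact h2
  -- Part 1
  have part1 : Tendsto (fun δ => eDelta Lf V qh α δ) (𝓝[>] (0:ℝ)) (𝓝 e0) := by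
    rw [tendsto_order]
    constructor
    · intro a ha
      filter_upwards [htl.eventually (eventually_gt_nhds ha), hIoo] with δ h1 h2
      obtain ⟨_, hu, hl⟩ := hblock δ h2
      calc a < e0 - 2*C*B*δ := h1
        _ ≤ eDelta Lf V qh α δ := by linarith
    · intro b hb
      have hlt : sInf S0 < e0 + (b - e0)/2 := by rw [← he0inf]; linarith
      obtain ⟨r, hrS, hrb⟩ := exists_lt_of_csInf_lt hS0ne hlt
      rw [hS0def] at hrS
      obtain ⟨m₂, w₂, hA2, hp2, hr⟩ := hrS
      set I₂ : ℝ := ∫ x : En n, V x * m₂ x with hI₂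
      have hden : (0:ℝ) < (b - e0)/2 / (|I₂| + 1) := by
        have : (0:ℝ) < |I₂| + 1 := by positivity
        have : (0:ℝ) < (b - e0)/2 := by linarith
        positivity
      have hIoo2 : Set.Ioo (0:ℝ) (min δs ((b - e0)/2 / (|I₂| + 1))) ∈ 𝓝[>] (0:ℝ) :=
        Ioo_mem_nhdsGT_of_mem ⟨le_rfl, lt_min hδspos hden⟩
      filter_upwards [hIoo2] with δ hδ
      obtain ⟨hδ0, hδ1⟩ := hδ
      have hδlt : δ < 1 / (2 * (C + 1)) :=
        lt_of_lt_of_le hδ1 (le_trans (min_le_left _ _) (min_le_right _ _))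
      have hle := hEle δ hδ0 hδlt m₂ w₂ hA2 hp2
      have hδIb : δ * I₂ < (b - e0)/2 := by
        have h1 : δ * I₂ ≤ δ * |I₂| := mul_le_mul_of_nonneg_left (le_abs_self _) hδ0.le
        have h2 : δ < (b - e0)/2 / (|I₂| + 1) := lt_of_lt_of_le hδ1 (min_le_right _ _)
        have h3 : δ * (|I₂| + 1) < (b - e0)/2 := by
          rw [← lt_div_iff₀ (by positivity : (0:ℝ) < |I₂| + 1)]
          exact h2
        nlinarith [abs_nonneg I₂]
      calc eDelta Lf V qh α δ ≤ kinetic Lf m₂ w₂ + massInt m₂ + δ * I₂ := hle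
        _ = r + δ * I₂ := by rw [hr]
        _ < e0 + (b - e0)/2 + (b - e0)/2 := by linarith
        _ = b := by ring
  refine ⟨part1, ?_⟩
  -- Part 2 by squeezing
  have hg : Tendsto (fun δ : ℝ => -(2*C*B) * δ) (𝓝[>] (0:ℝ)) (𝓝 0) := by
    have h1 : Tendsto (fun δ : ℝ => -(2*C*B) * δ) (𝓝 (0:ℝ)) (𝓝 (-(2*C*B) * 0)) :=
      (continuous_const.mul continuous_id).tendsto 0
    have h2 : Tendsto (fun δ : ℝ => -(2*C*B) * δ) (𝓝[>] (0:ℝ)) (𝓝 (-(2*C*B) * 0)) :=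
      h1.mono_left nhdsWithin_le_nhds
    have h3 : -(2*C*B) * (0:ℝ) = 0 := by ring
    rw [h3] at h2
    exact h2
  have hh : Tendsto (fun δ : ℝ => eDelta Lf V qh α δ - e0) (𝓝[>] (0:ℝ)) (𝓝 0) := by
    have h2 := part1.sub_const e0
    rw [sub_self] at h2
    exact h2
  refine tendsto_of_tendsto_of_tendsto_of_le_of_le' hg hh ?_ ?_
  · filter_upwards [hIoo] with δ hδ
    exact (hblock δ hδ).2.2
  · filter_upwards [hIoo] with δ hδ
    exact (hblock δ hδ).2.1
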